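/- arXiv:1303.3598 — 3 statements merged into one kernel-verified Lean document; each statement's English description precedes it below -/
import Mathlib

section
/- If a pure simplicial d-complex C on n vertices satisfies the non-revisiting path property, then the diameter of its dual graph (facet-ridge graph) is at most n - (d+1). -/
variable {V : Type*}

/-- An abstract simplicial complex: a collection of finite vertex sets closed under subsets. -/
def IsComplex [DecidableEq V] (C : Set (Finset V)) : Prop :=
  ∀ s ∈ C, ∀ t ⊆ s, t ∈ C

/-- A facet is an inclusion-maximal face. -/
def IsFacet [DecidableEq V] (C : Set (Finset V)) (F : Finset V) : Prop :=
  F ∈ C ∧ ∀ G ∈ C, F ⊆ G → G = F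

/-- A pure `d`-complex: every facet has `d+1` vertices. -/
def PureCplx [DecidableEq V] (C : Set (Finset V)) (d : ℕ) : Prop :=
  ∀ F, IsFacet C F → F.card = d + 1

/-- A facet path of length `L`: consecutive facets share a `(d-1)`-face. -/
def IsFacetPath [DecidableEq V] (C : Set (Finset V)) (d : ℕ) (Γ : ℕ → Finset V) (L : ℕ) : Prop :=
  (∀ i ≤ L, IsFacet C (Γ i)) ∧ ∀ i < L, (Γ i ∩ Γ (i + 1)).card = d

/-- A facet path is non-revisiting if whenever a vertex lies in two facets of the path,
it lies in all intermediate facets. -/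
def NonRevisiting (Γ : ℕ → Finset V) (L : ℕ) : Prop :=
  ∀ v : V, ∀ i j k : ℕ, i ≤ k → k ≤ j → j ≤ L → v ∈ Γ i → v ∈ Γ j → v ∈ Γ k

/-- The set of vertices of a complex. -/
def VertexSet [DecidableEq V] (C : Set (Finset V)) : Set V := {v | {v} ∈ C}

/-- The star of a face `σ`. -/
def St [DecidableEq V] (σ : Finset V) (C : Set (Finset V)) : Set (Finset V) :=
  {τ | τ ∪ σ ∈ C}

/-- The link of a face `σ`. -/
def Lk [DecidableEq V] (σ : Finset V) (C : Set (Finset V)) : Set (Finset V) :=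
  {τ | τ ∩ σ = ∅ ∧ τ ∪ σ ∈ C}

/-- A flag complex: every inclusion-minimal non-face (with all vertices in the complex)
has exactly two elements. -/
def FlagCplx [DecidableEq V] (C : Set (Finset V)) : Prop :=
  ∀ s : Finset V, (∀ v ∈ s, ({v} : Finset V) ∈ C) → s ∉ C → (∀ t ⊂ s, t ∈ C) → s.card = 2

/-- A normal complex: pure, and for each face `σ` the dual graph of the star of `σ`
is connected (any two facets containing `σ` are joined by a facet path staying in the star). -/
def NormalCplx [DecidableEq V] (C : Set (Finset V)) (d : ℕ) : Prop :=
  PureCplx C d ∧ ∀ σ ∈ C, ∀ X Y : Finset V, IsFacet C X → IsFacet C Y → σ ⊆ X → σ ⊆ Y →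
    ∃ Γ L, IsFacetPath C d Γ L ∧ Γ 0 = X ∧ Γ L = Y ∧ ∀ i ≤ L, σ ⊆ Γ i

/-- A vertex path in the 1-skeleton. -/
def IsVertexPath [DecidableEq V] (C : Set (Finset V)) (x : ℕ → V) (ℓ : ℕ) : Prop :=
  ∀ i < ℓ, ({x i, x (i + 1)} : Finset V) ∈ C

/-- Connectivity of the dual (facet-ridge) graph. -/
def DualConnected [DecidableEq V] (C : Set (Finset V)) (d : ℕ) : Prop :=
  ∀ X Y, IsFacet C X → IsFacet C Y →
    ∃ Γ L, IsFacetPath C d Γ L ∧ Γ 0 = X ∧ Γ L = Y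

/-- A pure simplicial `d`-complex on `n` vertices satisfying the
non-revisiting path property has dual graph diameter at most `n - (d+1)`. -/
theorem stmt_0 [DecidableEq V] (C : Set (Finset V)) (d n : ℕ)
    (hC : IsComplex C) (hpure : PureCplx C d)
    (hfin : (VertexSet C).Finite) (hn : hfin.toFinset.card = n)
    (hWv : ∀ X Y : Finset V, IsFacet C X → IsFacet C Y →
      ∃ Γ L, IsFacetPath C d Γ L ∧ Γ 0 = X ∧ Γ L = Y ∧ NonRevisiting Γ L) :
    ∀ X Y : Finset V, IsFacet C X → IsFacet C Y →
      ∃ Γ L, IsFacetPath C d Γ L ∧ Γ 0 = X ∧ Γ L = Y ∧ L ≤ n - (d + 1) := by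
  intro X Y hX hY
  obtain ⟨Γ, L, hpath, h0, hL, hnr⟩ := hWv X Y hX hY
  refine ⟨Γ, L, hpath, h0, hL, ?_⟩
  have hcard : ∀ i ≤ L, (Γ i).card = d + 1 := fun i hi => hpure _ (hpath.1 i hi)
  set S : ℕ → Finset V := fun k => (Finset.range (k+1)).biUnion Γ with hS
  have hmemS : ∀ k i, i ≤ k → Γ i ⊆ S k := by
    intro k i hik v hv
    simp only [hS, Finset.mem_biUnion, Finset.mem_range]
    exact ⟨i, Nat.lt_succ_of_le hik, hv⟩
  have key : ∀ k, k ≤ L → d + 1 + k ≤ (S k).card := by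
    intro k
    induction k with
    | zero =>
      intro _
      have : S 0 = Γ 0 := by simp [hS]
      rw [this, hcard 0 (Nat.zero_le _)]
    | succ k ih =>
      intro hk
      have hklt : k < L := Nat.lt_of_succ_le hk
      have hint := hpath.2 k hklt
      have hsd : ((Γ (k+1)) \ (Γ k)).card = 1 := by
        have h1 := Finset.card_sdiff_add_card_inter (Γ (k+1)) (Γ k)
        rw [Finset.inter_comm] at h1
        rw [hint, hcard (k+1) hk] at h1
        omega
      obtain ⟨v, hv⟩ := Finset.card_eq_one.mp hsd
      have hvmem : v ∈ Γ (k+1) ∧ v ∉ Γ k := by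
        have : v ∈ Γ (k+1) \ Γ k := by rw [hv]; exact Finset.mem_singleton_self v
        exact ⟨(Finset.mem_sdiff.mp this).1, (Finset.mem_sdiff.mp this).2⟩
      have hvS : v ∉ S k := by
        intro hvS
        simp only [hS, Finset.mem_biUnion, Finset.mem_range] at hvS
        obtain ⟨j, hj, hvj⟩ := hvS
        exact hvmem.2 (hnr v j (k+1) k (Nat.lt_succ_iff.mp hj) (Nat.le_succ k) hk hvj hvmem.1)
      have hsub : insert v (S k) ⊆ S (k+1) := by
        intro w hw
        rcases Finset.mem_insert.mp hw with h | h
        · exact h ▸ hmemS (k+1) (k+1) le_rfl hvmem.1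
        · simp only [hS, Finset.mem_biUnion, Finset.mem_range] at h ⊢
          obtain ⟨j, hj, hwj⟩ := h
          exact ⟨j, Nat.lt_succ_of_lt hj, hwj⟩
      have := Finset.card_le_card hsub
      rw [Finset.card_insert_of_notMem hvS] at this
      have hihk := ih (le_of_lt hklt)
      omega
  have hSn : (S L).card ≤ n := by
    rw [← hn]
    apply Finset.card_le_card
    intro v hv
    simp only [hS, Finset.mem_biUnion, Finset.mem_range] at hv
    obtain ⟨j, hj, hvj⟩ := hv
    rw [Set.Finite.mem_toFinset]
    exact hC (Γ j) (hpath.1 j (Nat.lt_succ_iff.mp hj)).1 {v} (Finset.singleton_subset_iff.mpr hvj)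
  have := key L le_rfl
  omega
end

section
/- In a non-revisiting facet path in a pure simplicial d-complex, each step after the first facet introduces at least one vertex not seen in any earlier facet of the path; consequently a non-revisiting facet path in a complex with n vertices has length at most n - (d+1). -/
variable {V : Type*}

/-- In a non-revisiting facet path, each step after the first facet
introduces a vertex not seen in any earlier facet; hence the length is at most `n - (d+1)`. -/
theorem stmt_1 [DecidableEq V] (C : Set (Finset V)) (d n : ℕ)
    (hC : IsComplex C) (hpure : PureCplx C d)
    (hfin : (VertexSet C).Finite) (hn : hfin.toFinset.card = n)
    (Γ : ℕ → Finset V) (L : ℕ)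
    (hpath : IsFacetPath C d Γ L) (hnr : NonRevisiting Γ L) :
    (∀ i, 1 ≤ i → i ≤ L → ∃ v ∈ Γ i, ∀ j < i, v ∉ Γ j) ∧ L ≤ n - (d + 1) := by
  have hcard : ∀ i ≤ L, (Γ i).card = d + 1 := fun i hi => hpure _ (hpath.1 i hi)
  -- fresh vertex at each step
  have fresh : ∀ i, 1 ≤ i → i ≤ L → ∃ v ∈ Γ i, ∀ j < i, v ∉ Γ j := by
    intro i h1 hi
    obtain ⟨m, rfl⟩ : ∃ m, i = m + 1 := ⟨i - 1, by omega⟩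
    have hne : (Γ (m + 1) \ Γ m).Nonempty := by
      rw [Finset.sdiff_nonempty]
      intro hsub
      have : Γ m ∩ Γ (m + 1) = Γ (m + 1) := by
        apply Finset.inter_eq_right.mpr hsub
      have h2 := hpath.2 m (by omega)
      rw [this, hcard (m+1) hi] at h2
      omega
    obtain ⟨v, hv⟩ := hne
    rw [Finset.mem_sdiff] at hv
    refine ⟨v, hv.1, ?_⟩
    intro j hj hvj
    exact hv.2 (hnr v j (m+1) m (by omega) (by omega) hi hvj hv.1)
  refine ⟨fresh, ?_⟩
  -- cardinality bound via prefix unions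
  have hgrow : ∀ i ≤ L, d + 1 + i ≤ ((Finset.range (i+1)).biUnion Γ).card := by
    intro i
    induction i with
    | zero =>
      intro _
      simp [hcard 0 (Nat.zero_le L)]
    | succ m ih =>
      intro hi
      obtain ⟨v, hvmem, hvfresh⟩ := fresh (m+1) (by omega) hi
      have hvnot : v ∉ (Finset.range (m+1)).biUnion Γ := by
        simp only [Finset.mem_biUnion, Finset.mem_range, not_exists]
        intro j hj
        exact hvfresh j hj.1 hj.2
      have hsub : insert v ((Finset.range (m+1)).biUnion Γ)
          ⊆ (Finset.range (m+1+1)).biUnion Γ := by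
        intro x hx
        rcases Finset.mem_insert.mp hx with rfl | hx
        · exact Finset.mem_biUnion.mpr ⟨m+1, Finset.mem_range.mpr (by omega), hvmem⟩
        · obtain ⟨j, hj, hxj⟩ := Finset.mem_biUnion.mp hx
          exact Finset.mem_biUnion.mpr ⟨j, Finset.mem_range.mpr (by
            have := Finset.mem_range.mp hj; omega), hxj⟩
      have h1 := Finset.card_le_card hsub
      rw [Finset.card_insert_of_notMem hvnot] at h1
      have h2 := ih (by omega)
      omega
  have hsubV : (Finset.range (L+1)).biUnion Γ ⊆ hfin.toFinset := by
    intro v hv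
    obtain ⟨j, hj, hvj⟩ := Finset.mem_biUnion.mp hv
    rw [Set.Finite.mem_toFinset]
    exact hC _ (hpath.1 j (by have := Finset.mem_range.mp hj; omega)).1 {v}
      (Finset.singleton_subset_iff.mpr hvj)
  have := Finset.card_le_card hsubV
  have h3 := hgrow L le_rfl
  omega
end

section
/- Let C be a pure simplicial d-complex, x a vertex of C, and Γ' a non-revisiting facet path in Lk(x,C). Then the facet path Γ defined by Γ(i) = Γ'(i) ∪ {x} is a non-revisiting facet path in C all of whose facets lie in St(x,C). -/
variable {V : Type*}

/-- Joining a non-revisiting facet path in `Lk(x,C)` with the vertex `x`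
yields a non-revisiting facet path in `C` whose facets all lie in `St(x,C)`. -/
theorem stmt_10 [DecidableEq V] (C : Set (Finset V)) (d : ℕ)
    (hC : IsComplex C) (hpure : PureCplx C d) (hd : 1 ≤ d)
    (x : V) (hx : ({x} : Finset V) ∈ C)
    (Γ' : ℕ → Finset V) (L : ℕ)
    (hpath : IsFacetPath (Lk {x} C) (d - 1) Γ' L) (hnr : NonRevisiting Γ' L) :
    IsFacetPath C d (fun i => Γ' i ∪ {x}) L ∧
    NonRevisiting (fun i => Γ' i ∪ {x}) L ∧
    ∀ i ≤ L, Γ' i ∪ {x} ∈ St {x} C := by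
  obtain ⟨hfac, hcard⟩ := hpath
  have hmemC : ∀ i ≤ L, Γ' i ∪ {x} ∈ C := fun i hi => ((hfac i hi).1).2
  have hdisj : ∀ i ≤ L, x ∉ Γ' i := by
    intro i hi hx'
    have h := ((hfac i hi).1).1
    have : x ∈ Γ' i ∩ {x} := Finset.mem_inter.2 ⟨hx', Finset.mem_singleton_self x⟩
    rw [h] at this; exact absurd this (Finset.notMem_empty x)
  refine ⟨⟨?_, ?_⟩, ?_, ?_⟩
  · intro i hi
    refine ⟨hmemC i hi, ?_⟩
    intro G hG hsub
    have hxG : x ∈ G := hsub (Finset.mem_union_right _ (Finset.mem_singleton_self x))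
    have hGL : G \ {x} ∈ Lk {x} C := by
      constructor
      · ext v; simp
      · have : (G \ {x}) ∪ {x} = G := by
          ext v; simp only [Finset.mem_union, Finset.mem_sdiff, Finset.mem_singleton]
          constructor
          · rintro (⟨h, _⟩ | rfl); exact h; exact hxG
          · intro h; by_cases hv : v = x
            · right; exact hv
            · left; exact ⟨h, hv⟩
        rw [this]; exact hG
    have hsub' : Γ' i ⊆ G \ {x} := by
      intro v hv
      refine Finset.mem_sdiff.2 ⟨hsub (Finset.mem_union_left _ hv), ?_⟩
      simp only [Finset.mem_singleton]
      rintro rfl; exact hdisj i hi hv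
    have := (hfac i hi).2 (G \ {x}) hGL hsub'
    ext v
    simp only [Finset.mem_union, Finset.mem_singleton]
    constructor
    · intro h; by_cases hv : v = x
      · right; exact hv
      · left; rw [← this]; exact Finset.mem_sdiff.2 ⟨h, by simpa⟩
    · rintro (h | rfl)
      · exact hsub (Finset.mem_union_left _ h)
      · exact hxG
  · intro i hi
    have h1 : x ∉ Γ' i := hdisj i (le_of_lt hi)
    have h2 : x ∉ Γ' (i+1) := hdisj (i+1) hi
    have heq : (Γ' i ∪ {x}) ∩ (Γ' (i+1) ∪ {x}) = (Γ' i ∩ Γ' (i+1)) ∪ {x} := by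
      ext v
      simp only [Finset.mem_inter, Finset.mem_union, Finset.mem_singleton]
      tauto
    rw [heq, Finset.card_union_of_disjoint, hcard i hi, Finset.card_singleton]
    · omega
    · simp only [Finset.disjoint_singleton_right, Finset.mem_inter]
      exact fun ⟨h, _⟩ => h1 h
  · intro v i j k hik hkj hjL hvi hvj
    simp only [Finset.mem_union, Finset.mem_singleton] at *
    rcases hvi with hvi | rfl
    · rcases hvj with hvj | rfl
      · exact Or.inl (hnr v i j k hik hkj hjL hvi hvj)
      · exact absurd hvi (hdisj i (le_trans hik (le_trans hkj hjL)))
    · exact Or.inr rfl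
  · intro i hi
    show (Γ' i ∪ {x}) ∪ {x} ∈ C
    rw [Finset.union_assoc, Finset.union_self]
    exact hmemC i hi
end
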